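/- arXiv:2601.20653 — 5 statements merged into one kernel-verified Lean document; each statement's English description precedes it below -/
import Mathlib

section
/- For every α ∈ {1,…,s}, σ, τ ≥ 0, every ordered vector W of ℝ^s, and every c ≥ 0, one has Φ_{α,σ,τ}(W + c·U) ≤ Φ_{α,σ,τ}(W) + c·U coordinatewise (sub-homogeneity of the one-step MJSRE map with respect to addition of a constant vector). -/
/-- The nondecreasing rearrangement operator `R` on vectors of ℝ^s. -/
noncomputable def sortVec {s : ℕ} (v : Fin s → ℝ) : Fin s → ℝ := v ∘ Tuple.sort v

/-- The all-ones vector `U`. -/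
def Uvec (s : ℕ) : Fin s → ℝ := fun _ => 1

/-- `L(α)`: coordinate `i` is `1` if `i ≤ α` and `0` otherwise (indices 0-based,
so `α : Fin s` represents the number of requested servers `α+1 ∈ {1,…,s}`). -/
def Lvec {s : ℕ} (α : Fin s) : Fin s → ℝ := fun i => if i ≤ α then 1 else 0

/-- `S(α, W)`: coordinate `i` is `max (W^α) (W^i)`. -/
def Svec {s : ℕ} (α : Fin s) (W : Fin s → ℝ) : Fin s → ℝ := fun i => max (W α) (W i)

/-- A vector is ordered if its coordinates are nondecreasing and nonnegative. -/
def IsOrdered {s : ℕ} (W : Fin s → ℝ) : Prop := Monotone W ∧ ∀ i, 0 ≤ W i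

/-- The one-step MJSRE map `Φ_{α,σ,τ}(W) = R(S(α,W) + σ·L(α) − τ·U)⁺`. -/
noncomputable def Phi {s : ℕ} (α : Fin s) (σ τ : ℝ) (W : Fin s → ℝ) : Fin s → ℝ :=
  sortVec (fun i => max (Svec α W i + σ * Lvec α i - τ * Uvec s i) 0)

/-! Sorting is monotone and commutes with monotone maps of the values. Writing `x` for the vector
`S(α,W) + σ·L(α) − τ·U`, the vector sorted by `Φ(W + c·U)` is `(x + c·U)⁺ ≤ x⁺ + c·U`, so
`Φ(W + c·U) ≤ R(x⁺ + c·U) = R(x⁺) + c·U = Φ(W) + c·U`. -/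

namespace Tuple

open Finset

variable {n : ℕ} {α : Type*} [LinearOrder α]

theorem comp_sort_apply_le_iff_lt_card (f : Fin n → α) (j : Fin n) (a : α) :
    f (sort f j) ≤ a ↔ j < #{i | f i ≤ a} := by
  calc f (sort f j) ≤ a ↔ j < #{i | f (sort f i) ≤ a} :=
        (lt_card_le_iff_apply_le_of_monotone (monotone_sort f)).symm
    _ ↔ j < #{i | f i ≤ a} := by
      rw [card_equiv (sort f) (t := {i | f i ≤ a}) (by simp)]

theorem comp_sort_mono {f g : Fin n → α} (h : f ≤ g) : f ∘ sort f ≤ g ∘ sort g := by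
  intro j
  rw [Function.comp_apply, comp_sort_apply_le_iff_lt_card]
  calc (j : ℕ) < #{i | g i ≤ g (sort g j)} := (comp_sort_apply_le_iff_lt_card g j _).1 le_rfl
    _ ≤ #{i | f i ≤ g (sort g j)} := card_le_card fun i => by simpa using (h i).trans

theorem comp_sort_comp_of_monotone {β : Type*} [LinearOrder β] {φ : α → β} (hφ : Monotone φ)
    (f : Fin n → α) : (φ ∘ f) ∘ sort (φ ∘ f) = φ ∘ (f ∘ sort f) :=
  (comp_sort_eq_comp_iff_monotone.2 (hφ.comp (monotone_sort f))).symm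

end Tuple

theorem sortVec_le_sortVec_add {s : ℕ} {v w : Fin s → ℝ} {c : ℝ} (h : ∀ i, v i ≤ w i + c)
    (j : Fin s) : sortVec v j ≤ sortVec w j + c := by
  have hsort := Tuple.comp_sort_comp_of_monotone (add_left_mono (a := c)) w
  calc sortVec v j ≤ ((· + c) ∘ w) (Tuple.sort ((· + c) ∘ w) j) :=
        Tuple.comp_sort_mono (f := v) (g := (· + c) ∘ w) h j
    _ = sortVec w j + c := congrFun hsort j

theorem max_add_zero_le {G : Type*} [AddCommGroup G] [LinearOrder G] [IsOrderedAddMonoid G]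
    {x c : G} (hc : 0 ≤ c) : max (x + c) 0 ≤ max x 0 + c := by
  rw [← max_add_add_right, zero_add]
  exact max_le_max_left _ hc

theorem Phi_subhomogeneous_general (s : ℕ) (α : Fin s) (σ τ : ℝ) (W : Fin s → ℝ)
    (c : ℝ) (hc : 0 ≤ c) :
    ∀ i, Phi α σ τ (W + c • Uvec s) i ≤ Phi α σ τ W i + c * Uvec s i := by
  intro i
  have hS : ∀ j, Svec α (W + c • Uvec s) j = Svec α W j + c := fun j => by
    simp [Svec, Uvec, max_add_add_right]
  simpa only [Phi, Uvec, mul_one] using sortVec_le_sortVec_add (fun j => by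
    rw [hS, add_right_comm _ c, add_sub_right_comm]
    exact max_add_zero_le hc) i

/-- Sub-homogeneity of the one-step MJSRE map: for every `α ∈ {1,…,s}`, `σ, τ ≥ 0`,
ordered `W` and constant `c ≥ 0`, one has `Φ_{α,σ,τ}(W + c·U) ≤ Φ_{α,σ,τ}(W) + c·U`
coordinatewise. -/
theorem Phi_subhomogeneous (s : ℕ) (hs : 1 ≤ s) (α : Fin s) (σ τ : ℝ)
    (hσ : 0 ≤ σ) (hτ : 0 ≤ τ) (W : Fin s → ℝ) (hW : IsOrdered W)
    (c : ℝ) (hc : 0 ≤ c) :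
    ∀ i, Phi α σ τ (W + c • Uvec s) i ≤ Phi α σ τ W i + c * Uvec s i :=
  Phi_subhomogeneous_general s α σ τ W c hc
end

section
/- For any bi-infinite job data ξ_k = (α_k, σ_k, τ_k), k ∈ ℤ, with 1 ≤ α_k ≤ s, σ_k ≥ 0, τ_k ≥ 0, the Loynes sequence is monotonically nondecreasing: for every n ≥ 0, M_n(ξ) ≤ M_{n+1}(ξ) coordinatewise. -/
/-- One-step MJSRE map packaged on job data `(α, σ, τ)`. -/
noncomputable def PhiD {s : ℕ} (p : Fin s × ℝ × ℝ) : (Fin s → ℝ) → (Fin s → ℝ) :=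
  Phi p.1 p.2.1 p.2.2

/-- The Loynes sequence associated with bi-infinite job data `ξ : ℤ → Fin s × ℝ × ℝ`:
`M 0 = 0` and `M (n+1)` is obtained by applying the one-step maps with data
`ξ (-(n+1)), …, ξ (-1)` in chronological order starting from the zero vector. -/
noncomputable def Loynes {s : ℕ} : (ℤ → Fin s × ℝ × ℝ) → ℕ → (Fin s → ℝ)
  | _, 0 => 0
  | ξ, n + 1 => PhiD (ξ (-1)) (Loynes (fun k => ξ (k - 1)) n)

/-!
Sorting is monotone: if `v ≤ w` coordinatewise, some index `k` is among the `s - i` largest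
coordinates of `v` and among the `i + 1` smallest of `w`, so `(sort v)ᵢ ≤ v k ≤ w k ≤ (sort w)ᵢ`.
Hence every one-step map `Φ` is monotone and nonnegative. Then `M₀ = 0 ≤ M₁`, and if
`M_n ≤ M_{n+1}` for all job data, applying `Φ_{ξ₋₁}` to this inequality for the shifted data
gives `M_{n+1} ≤ M_{n+2}`.
-/

open Finset

lemma Fin.card_Ici_add_card_Iic {n : ℕ} (i : Fin n) : #(Ici i) + #(Iic i) = n + 1 := by
  rw [Fin.card_Ici, Fin.card_Iic]
  omega

lemma Equiv.Perm.exists_ge_le_apply_eq {n : ℕ} (σ τ : Equiv.Perm (Fin n)) (i : Fin n) :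
    ∃ a ≥ i, ∃ b ≤ i, σ a = τ b := by
  have hcard : #(univ : Finset (Fin n)) < #((Ici i).image σ) + #((Iic i).image τ) := by
    rw [card_image_of_injective _ σ.injective, card_image_of_injective _ τ.injective,
      Fin.card_Ici_add_card_Iic, card_univ, Fintype.card_fin]
    exact Nat.lt_succ_self n
  obtain ⟨k, hk⟩ := inter_nonempty_of_card_lt_card_add_card (subset_univ _) (subset_univ _) hcard
  obtain ⟨⟨a, ha, rfl⟩, ⟨b, hb, hab⟩⟩ := And.imp mem_image.mp mem_image.mp (mem_inter.mp hk)
  exact ⟨a, mem_Ici.mp ha, b, mem_Iic.mp hb, hab.symm⟩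

lemma Tuple.comp_sort_le_comp_sort {n : ℕ} {β : Type*} [LinearOrder β] {v w : Fin n → β}
    (h : v ≤ w) : v ∘ Tuple.sort v ≤ w ∘ Tuple.sort w := by
  intro i
  obtain ⟨a, hia, b, hbi, hab⟩ := (Tuple.sort v).exists_ge_le_apply_eq (Tuple.sort w) i
  calc v (Tuple.sort v i) ≤ v (Tuple.sort v a) := Tuple.monotone_sort v hia
    _ ≤ w (Tuple.sort v a) := h _
    _ = w (Tuple.sort w b) := by rw [hab]
    _ ≤ w (Tuple.sort w i) := Tuple.monotone_sort w hbi

lemma sortVec_mono {s : ℕ} : Monotone (sortVec (s := s)) :=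
  fun _ _ => Tuple.comp_sort_le_comp_sort

lemma Phi_nonneg {s : ℕ} (α : Fin s) (σ τ : ℝ) (W : Fin s → ℝ) : 0 ≤ Phi α σ τ W :=
  fun _ => le_max_right _ _

lemma Phi_mono {s : ℕ} (α : Fin s) (σ τ : ℝ) : Monotone (Phi α σ τ) := by
  intro W W' h
  refine sortVec_mono fun j => max_le_max_right 0 ?_
  have hS : Svec α W j ≤ Svec α W' j := max_le_max (h α) (h j)
  linarith

theorem Loynes_mono_general (s : ℕ) (ξ : ℤ → Fin s × ℝ × ℝ) :
    ∀ n : ℕ, ∀ i, Loynes ξ n i ≤ Loynes ξ (n + 1) i := by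
  intro n
  induction n generalizing ξ with
  | zero => exact Phi_nonneg _ _ _ _
  | succ n ih => exact Phi_mono _ _ _ (ih fun k => ξ (k - 1))

/-- Monotonicity of the Loynes sequence: for any bi-infinite job data
`ξ_k = (α_k, σ_k, τ_k)` with `σ_k ≥ 0` and `τ_k ≥ 0`, the Loynes sequence is
coordinatewise nondecreasing in `n`. -/
theorem Loynes_mono (s : ℕ) (hs : 1 ≤ s) (ξ : ℤ → Fin s × ℝ × ℝ)
    (hσ : ∀ k, 0 ≤ (ξ k).2.1) (hτ : ∀ k, 0 ≤ (ξ k).2.2) :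
    ∀ n : ℕ, ∀ i, Loynes ξ n i ≤ Loynes ξ (n + 1) i :=
  Loynes_mono_general s ξ
end

section
/- For every fixed α ∈ {1,…,s} and σ, τ ≥ 0, the one-step MJSRE map Φ_{α,σ,τ} is continuous on ℝ^s. Consequently, for bi-infinite job data ξ, if the Loynes sequence M_n(ξ) converges coordinatewise to a finite vector M_∞(ξ), then the Loynes sequence M_n(θξ) for the shifted data θξ (where (θξ)_k = ξ_{k+1}) also converges coordinatewise, and its limit equals Φ_{α_0,σ_0,τ_0}(M_∞(ξ)); i.e., the limit satisfies the stochastic recurrence equation. -/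
open Filter Topology

section OrderStatistics

variable {α : Type*} [LinearOrder α] {n : ℕ}

lemma Fin.exists_le_apply_of_injective {k : Fin n} {g : Fin (k + 1) → Fin n}
    (hg : Function.Injective g) : ∃ j, k ≤ g j := by
  by_contra! h
  have := Fintype.card_le_of_injective (fun j => (⟨g j, h j⟩ : Fin k))
    fun i j hij => hg (Fin.ext (Fin.mk.inj_iff.mp hij))
  simp at this

lemma Tuple.comp_sort_apply_le_sup' (v : Fin n → α) {k : Fin n} (f : Fin (k + 1) ↪ Fin n) :
    (v ∘ Tuple.sort v) k ≤ Finset.univ.sup' Finset.univ_nonempty (v ∘ f) := by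
  obtain ⟨j, hj⟩ := Fin.exists_le_apply_of_injective
    ((Tuple.sort v).symm.injective.comp f.injective)
  calc (v ∘ Tuple.sort v) k ≤ (v ∘ Tuple.sort v) ((Tuple.sort v).symm (f j)) :=
        Tuple.monotone_sort v hj
    _ = v (f j) := by simp
    _ ≤ _ := Finset.le_sup' (v ∘ f) (Finset.mem_univ j)

theorem Tuple.comp_sort_apply_eq_inf'_sup' (v : Fin n → α) (k : Fin n) :
    (v ∘ Tuple.sort v) k = Finset.univ.inf' ⟨Fin.castLEEmb k.isLt, Finset.mem_univ _⟩
      fun f : Fin (k + 1) ↪ Fin n => Finset.univ.sup' Finset.univ_nonempty (v ∘ f) := by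
  refine le_antisymm (Finset.le_inf' _ _ fun f _ => Tuple.comp_sort_apply_le_sup' v f) ?_
  refine (Finset.inf'_le _ (Finset.mem_univ
    ((Fin.castLEEmb k.isLt).trans (Tuple.sort v).toEmbedding))).trans ?_
  refine Finset.sup'_le _ _ fun j _ => Tuple.monotone_sort v ?_
  exact Fin.le_iff_val_le_val.mpr (Nat.lt_succ_iff.mp j.isLt)

theorem Tuple.continuous_comp_sort [TopologicalSpace α] [OrderClosedTopology α] :
    Continuous fun v : Fin n → α => v ∘ Tuple.sort v := by
  refine continuous_pi fun k => ?_
  simp only [Tuple.comp_sort_apply_eq_inf'_sup']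
  exact Continuous.finset_inf'_apply _ fun f _ =>
    Continuous.finset_sup'_apply _ fun j _ => continuous_apply (f j)

end OrderStatistics

section MJSRE

variable {s : ℕ}

theorem continuous_Phi (α : Fin s) (σ τ : ℝ) : Continuous (Phi α σ τ) := by
  refine Tuple.continuous_comp_sort.comp (continuous_pi fun i => ?_)
  unfold Svec
  fun_prop

lemma Loynes_shift_succ (ξ : ℤ → Fin s × ℝ × ℝ) (n : ℕ) :
    Loynes (fun k => ξ (k + 1)) (n + 1) = PhiD (ξ 0) (Loynes ξ n) := by
  simp [Loynes]

theorem tendsto_Loynes_shift {ξ : ℤ → Fin s × ℝ × ℝ} {Minf : Fin s → ℝ}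
    (h : Tendsto (Loynes ξ) atTop (𝓝 Minf)) :
    Tendsto (Loynes fun k => ξ (k + 1)) atTop (𝓝 (PhiD (ξ 0) Minf)) := by
  rw [← tendsto_add_atTop_iff_nat 1]
  simp only [Loynes_shift_succ]
  exact ((continuous_Phi (ξ 0).1 (ξ 0).2.1 (ξ 0).2.2).tendsto Minf).comp h

end MJSRE

theorem Phi_continuous_and_sre_limit_general (s : ℕ) :
    (∀ (α : Fin s) (σ τ : ℝ), 0 ≤ σ → 0 ≤ τ → Continuous (Phi α σ τ)) ∧
    ∀ (ξ : ℤ → Fin s × ℝ × ℝ), (∀ k, 0 ≤ (ξ k).2.1) → (∀ k, 0 ≤ (ξ k).2.2) →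
      ∀ Minf : Fin s → ℝ,
        (∀ i, Tendsto (fun n : ℕ => Loynes ξ n i) atTop (𝓝 (Minf i))) →
        ∀ i, Tendsto (fun n : ℕ => Loynes (fun k => ξ (k + 1)) n i) atTop
          (𝓝 (PhiD (ξ 0) Minf i)) :=
  ⟨fun α σ τ _ _ => continuous_Phi α σ τ, fun _ _ _ _ hM =>
    tendsto_pi_nhds.mp (tendsto_Loynes_shift (tendsto_pi_nhds.mpr hM))⟩

/-- Continuity of the one-step MJSRE map, and its consequence for limits of Loynes
sequences: if the Loynes sequence for data `ξ` converges coordinatewise to a finite vector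
`M∞`, then the Loynes sequence for the shifted data `θξ` converges coordinatewise to
`Φ_{ξ₀}(M∞)`, i.e. the limit satisfies the stochastic recurrence equation. -/
theorem Phi_continuous_and_sre_limit (s : ℕ) (hs : 1 ≤ s) :
    (∀ (α : Fin s) (σ τ : ℝ), 0 ≤ σ → 0 ≤ τ → Continuous (Phi α σ τ)) ∧
    ∀ (ξ : ℤ → Fin s × ℝ × ℝ), (∀ k, 0 ≤ (ξ k).2.1) → (∀ k, 0 ≤ (ξ k).2.2) →
      ∀ Minf : Fin s → ℝ,
        (∀ i, Tendsto (fun n : ℕ => Loynes ξ n i) atTop (𝓝 (Minf i))) →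
        ∀ i, Tendsto (fun n : ℕ => Loynes (fun k => ξ (k + 1)) n i) atTop
          (𝓝 (PhiD (ξ 0) Minf i)) :=
  Phi_continuous_and_sre_limit_general s
end

section
/- (External monotonicity of the multiserver-job queuing system.) Let (T_k) and (T'_k) be two nondecreasing sequences of arrival epochs with T_k ≤ T'_k for all k, and let (α_k, σ_k) be a common sequence of jobs with 1 ≤ α_k ≤ s and σ_k ≥ 0. Then for all m ≤ n, the workload vectors satisfy W_{[m,n]}(T) ≤ W_{[m,n]}(T') + (T'_n − T_n)·U coordinatewise, and consequently the last activity times satisfy X_{[m,n]}(T) ≤ X_{[m,n]}(T'). -/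
/-- Workload vectors of the multiserver-job system fed by arrival epochs `T` and jobs
`(a k, σf k)` for indices starting at `m`: `Wseq T a σf m j` is the workload vector
`W_{[m, m+j]}`, i.e. `W_{[m,m]} = 0` and
`W_{[m,k+1]} = Φ_{α_k, σ_k, T_{k+1} − T_k}(W_{[m,k]})`. -/
noncomputable def Wseq {s : ℕ} (T : ℤ → ℝ) (a : ℤ → Fin s) (σf : ℤ → ℝ) (m : ℤ) :
    ℕ → (Fin s → ℝ)
  | 0 => 0
  | j + 1 => Phi (a (m + j)) (σf (m + j)) (T (m + j + 1) - T (m + j)) (Wseq T a σf m j)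

/-- The last activity time `X_{[m,n]} = T_n + max (W_{[m,n]}^{α_n} + σ_n, W_{[m,n]}^s)`. -/
noncomputable def Xlast {s : ℕ} (hs : 0 < s) (T : ℤ → ℝ) (a : ℤ → Fin s) (σf : ℤ → ℝ)
    (m n : ℤ) : ℝ :=
  T n + max (Wseq T a σf m (n - m).toNat (a n) + σf n)
      (Wseq T a σf m (n - m).toNat ⟨s - 1, by omega⟩)


/-!
Delaying arrivals can only help: shifting every epoch from `T_k` to `T'_k ≥ T_k` lowers the
workload seen at the `n`-th arrival by at most the extra delay `T'_n - T_n`. The one-step map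
`Φ` is compatible with constant shifts: the maximum in `S`, the positive part and the sorting
`R` are all monotone and commute with adding a constant, while the idle time `τ` enters with a
minus sign. Inducting along the arrivals, the slack `T'_k - T_k` is carried from step to step,
and adding `T_n` to the inequality at the last arrival gives `X ≤ X'`.
-/

open Finset

section sortVec

variable {s : ℕ}

lemma card_sortVec_le (v : Fin s → ℝ) (a : ℝ) :
    #{i | sortVec v i ≤ a} = #{i | v i ≤ a} :=
  card_equiv (Tuple.sort v) fun i => by
    simp only [mem_filter, mem_univ, true_and]
    rfl

lemma sortVec_le_iff (v : Fin s → ℝ) (k : Fin s) (a : ℝ) :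
    sortVec v k ≤ a ↔ k < #{i | v i ≤ a} := by
  rw [← card_sortVec_le]
  exact (Tuple.lt_card_le_iff_apply_le_of_monotone (Tuple.monotone_sort v)).symm

lemma sortVec_le_add {v w : Fin s → ℝ} {c : ℝ} (h : ∀ i, v i ≤ w i + c) (k : Fin s) :
    sortVec v k ≤ sortVec w k + c := by
  have hk : k < #{i | w i ≤ sortVec w k} := (sortVec_le_iff w k _).1 le_rfl
  refine (sortVec_le_iff v k _).2 (hk.trans_le (card_le_card ?_))
  exact monotone_filter_right _ fun i _ hi => (h i).trans (by simpa using hi)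

end sortVec

lemma Svec_le_add {s : ℕ} (α : Fin s) {W W' : Fin s → ℝ} {c : ℝ}
    (h : ∀ i, W i ≤ W' i + c) (i : Fin s) : Svec α W i ≤ Svec α W' i + c := by
  simp only [Svec, ← max_add_add_right]
  exact max_le_max (h α) (h i)

lemma Phi_le_add {s : ℕ} (α : Fin s) (σ τ τ' : ℝ) {W W' : Fin s → ℝ} {c : ℝ}
    (h : ∀ i, W i ≤ W' i + c) (hc : 0 ≤ c + τ' - τ) (i : Fin s) :
    Phi α σ τ W i ≤ Phi α σ τ' W' i + (c + τ' - τ) := by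
  refine sortVec_le_add (fun j => ?_) i
  rw [← max_add_add_right]
  refine max_le_max ?_ (by linarith)
  have := Svec_le_add α h j
  simp only [Uvec]
  linarith

lemma Wseq_le_add {s : ℕ} {T T' : ℤ → ℝ} (hle : ∀ k, T k ≤ T' k) (a : ℤ → Fin s)
    (σf : ℤ → ℝ) (m : ℤ) (j : ℕ) (i : Fin s) :
    Wseq T a σf m j i ≤ Wseq T' a σf m j i + (T' (m + j) - T (m + j)) := by
  induction j generalizing i with
  | zero => simpa [Wseq] using hle m
  | succ j ih =>
    have hslack : (T' (m + j) - T (m + j)) + (T' (m + j + 1) - T' (m + j))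
        - (T (m + j + 1) - T (m + j)) = T' (m + (j + 1 : ℕ)) - T (m + (j + 1 : ℕ)) := by
      rw [Nat.cast_succ, ← add_assoc]
      ring
    have hstep := Phi_le_add (a (m + j)) (σf (m + j)) _ _ ih
      (hslack ▸ sub_nonneg.2 (hle _)) i
    rwa [hslack] at hstep

theorem mjqm_external_monotonicity_general (s : ℕ) (hs : 0 < s)
    (T T' : ℤ → ℝ) (hle : ∀ k, T k ≤ T' k)
    (a : ℤ → Fin s) (σf : ℤ → ℝ) :
    ∀ m n : ℤ, m ≤ n →
      (∀ i, Wseq T a σf m (n - m).toNat i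
          ≤ Wseq T' a σf m (n - m).toNat i + (T' n - T n) * Uvec s i) ∧
      Xlast hs T a σf m n ≤ Xlast hs T' a σf m n := by
  intro m n hmn
  have hW : ∀ i, Wseq T a σf m (n - m).toNat i
      ≤ Wseq T' a σf m (n - m).toNat i + (T' n - T n) := by
    intro i
    simpa [Int.toNat_of_nonneg (sub_nonneg.2 hmn)] using Wseq_le_add hle a σf m (n - m).toNat i
  refine ⟨fun i => by simpa [Uvec] using hW i, ?_⟩
  have hmax := max_le_max (add_le_add_left (hW (a n)) (σf n)) (hW ⟨s - 1, by omega⟩)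
  rw [add_right_comm, max_add_add_right] at hmax
  unfold Xlast
  linarith

/-- External monotonicity of the multiserver-job queuing system: if `T ≤ T'` pointwise
(for a common job sequence), then `W_{[m,n]}(T) ≤ W_{[m,n]}(T') + (T'_n − T_n)·U`
coordinatewise, and consequently `X_{[m,n]}(T) ≤ X_{[m,n]}(T')`. -/
theorem mjqm_external_monotonicity (s : ℕ) (hs : 0 < s)
    (T T' : ℤ → ℝ) (hT : Monotone T) (hT' : Monotone T') (hle : ∀ k, T k ≤ T' k)
    (a : ℤ → Fin s) (σf : ℤ → ℝ) (hσ : ∀ k, 0 ≤ σf k) :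
    ∀ m n : ℤ, m ≤ n →
      (∀ i, Wseq T a σf m (n - m).toNat i
          ≤ Wseq T' a σf m (n - m).toNat i + (T' n - T n) * Uvec s i) ∧
      Xlast hs T a σf m n ≤ Xlast hs T' a σf m n :=
  mjqm_external_monotonicity_general s hs T T' hle a σf
end

section
/- (Separability of the multiserver-job queuing system.) Let (T_k) be a nondecreasing sequence of arrival epochs and (α_k, σ_k) jobs with 1 ≤ α_k ≤ s and σ_k ≥ 0. If m ≤ l < n and X_{[m,l]} ≤ T_{l+1}, then W_{[m,l+1]} = 0, hence W_{[m,n]} = W_{[l+1,n]} and X_{[m,n]} = X_{[l+1,n]}. -/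
/-! When the last job of `[m,l]` has left by `T_{l+1}`, every coordinate of
`S(α_l, W_{[m,l]}) + σ_l·L(α_l)` is at most `X_{[m,l]} - T_l ≤ T_{l+1} - T_l`, so the next workload
vector is `0`. From a zero workload vector the recursion restarts exactly as for the system
started empty at `l+1`. -/

lemma monotone_sortVec {s : ℕ} (v : Fin s → ℝ) : Monotone (sortVec v) :=
  Tuple.monotone_sort v

lemma sortVec_zero {s : ℕ} : sortVec (0 : Fin s → ℝ) = 0 := rfl

lemma Wseq_monotone {s : ℕ} (T : ℤ → ℝ) (a : ℤ → Fin s) (σf : ℤ → ℝ) (m : ℤ) :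
    ∀ j, Monotone (Wseq T a σf m j)
  | 0 => monotone_const
  | j + 1 => by rw [Wseq, Phi]; exact monotone_sortVec _

lemma Phi_eq_zero {s : ℕ} (hs : 0 < s) {α : Fin s} {σ τ : ℝ} {W : Fin s → ℝ}
    (hW : Monotone W) (hα : W α + σ ≤ τ) (htop : W ⟨s - 1, by omega⟩ ≤ τ) :
    Phi α σ τ W = 0 := by
  have hle_top : ∀ i : Fin s, W i ≤ τ := fun i =>
    (hW (Fin.mk_le_mk.mpr (by omega) : i ≤ ⟨s - 1, by omega⟩)).trans htop
  suffices h : (fun i => max (Svec α W i + σ * Lvec α i - τ * Uvec s i) 0) = 0 by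
    rw [Phi, h, sortVec_zero]
  funext i
  refine max_eq_right (sub_nonpos.mpr ?_)
  by_cases hi : i ≤ α
  · simpa [Svec, Lvec, Uvec, hi, max_eq_left (hW hi)] using hα
  · simpa [Svec, Lvec, Uvec, hi] using ⟨hle_top α, hle_top i⟩

lemma Wseq_add_of_eq_zero {s : ℕ} {T : ℤ → ℝ} {a : ℤ → Fin s} {σf : ℤ → ℝ} {m : ℤ} {j : ℕ}
    (h : Wseq T a σf m j = 0) (k : ℕ) :
    Wseq T a σf m (j + k) = Wseq T a σf (m + j) k := by
  induction k with
  | zero => exact h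
  | succ k ih =>
    rw [← add_assoc, Wseq, Wseq, ih]
    push_cast
    ring_nf

lemma Xlast_le_iff {s : ℕ} (hs : 0 < s) (T : ℤ → ℝ) (a : ℤ → Fin s) (σf : ℤ → ℝ)
    (m n : ℤ) (t : ℝ) :
    Xlast hs T a σf m n ≤ t ↔
      Wseq T a σf m (n - m).toNat (a n) + σf n ≤ t - T n ∧
        Wseq T a σf m (n - m).toNat ⟨s - 1, by omega⟩ ≤ t - T n := by
  rw [Xlast, ← le_sub_iff_add_le', max_le_iff]

lemma Wseq_succ_eq_zero_of_Xlast_le {s : ℕ} (hs : 0 < s) {T : ℤ → ℝ} {a : ℤ → Fin s}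
    {σf : ℤ → ℝ} {m l : ℤ} (hml : m ≤ l) (hX : Xlast hs T a σf m l ≤ T (l + 1)) :
    Wseq T a σf m ((l - m).toNat + 1) = 0 := by
  obtain ⟨hα, htop⟩ := (Xlast_le_iff hs T a σf m l _).mp hX
  have hl : m + ((l - m).toNat : ℤ) = l := by omega
  rw [Wseq, hl]
  exact Phi_eq_zero hs (Wseq_monotone T a σf m _) hα htop

theorem mjqm_separability_general (s : ℕ) (hs : 0 < s)
    (T : ℤ → ℝ) (a : ℤ → Fin s) (σf : ℤ → ℝ)
    (m l n : ℤ) (hml : m ≤ l) (hln : l < n)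
    (hX : Xlast hs T a σf m l ≤ T (l + 1)) :
    Wseq T a σf m (l + 1 - m).toNat = 0 ∧
    Wseq T a σf m (n - m).toNat = Wseq T a σf (l + 1) (n - (l + 1)).toNat ∧
    Xlast hs T a σf m n = Xlast hs T a σf (l + 1) n := by
  have hzero := Wseq_succ_eq_zero_of_Xlast_le hs hml hX
  have hrestart : m + (((l - m).toNat + 1 : ℕ) : ℤ) = l + 1 := by omega
  have hW : Wseq T a σf m (n - m).toNat = Wseq T a σf (l + 1) (n - (l + 1)).toNat := by
    rw [show (n - m).toNat = (l - m).toNat + 1 + (n - (l + 1)).toNat by omega,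
      Wseq_add_of_eq_zero hzero, hrestart]
  refine ⟨by rwa [show (l + 1 - m).toNat = (l - m).toNat + 1 by omega], hW, ?_⟩
  rw [Xlast, Xlast, hW]

/-- Separability of the multiserver-job queuing system: if `m ≤ l < n` and
`X_{[m,l]} ≤ T_{l+1}`, then `W_{[m,l+1]} = 0`, hence `W_{[m,n]} = W_{[l+1,n]}` and
`X_{[m,n]} = X_{[l+1,n]}`. -/
theorem mjqm_separability (s : ℕ) (hs : 0 < s)
    (T : ℤ → ℝ) (hT : Monotone T) (a : ℤ → Fin s) (σf : ℤ → ℝ) (hσ : ∀ k, 0 ≤ σf k)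
    (m l n : ℤ) (hml : m ≤ l) (hln : l < n)
    (hX : Xlast hs T a σf m l ≤ T (l + 1)) :
    Wseq T a σf m (l + 1 - m).toNat = 0 ∧
    Wseq T a σf m (n - m).toNat = Wseq T a σf (l + 1) (n - (l + 1)).toNat ∧
    Xlast hs T a σf m n = Xlast hs T a σf (l + 1) n :=
  mjqm_separability_general s hs T a σf m l n hml hln hX
end
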